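/- For every ε ∈ (0,1], ∫_ℝ (1/ξ²)·|1 - e^{-εξ²/2}|² · log(e + 1/|ξ|) dξ ≤ √ε · ∫_ℝ (1/z²)·|1 - e^{-z²/2}|² · log(e + √ε/|z|) dz, and the latter integral (with log(e + √ε/|z|) ≤ log(e + 1/|z|)) is finite. -/

import Mathlib

open Real MeasureTheory Set

set_option maxHeartbeats 2000000 in
theorem stmt_19 (ε : ℝ) (hε0 : 0 < ε) (hε1 : ε ≤ 1) :
    (∫ ξ : ℝ, (1 / ξ ^ 2) * |1 - Real.exp (-(ε * ξ ^ 2 / 2))| ^ 2 *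
          Real.log (Real.exp 1 + 1 / |ξ|))
        ≤ Real.sqrt ε *
          ∫ z : ℝ, (1 / z ^ 2) * |1 - Real.exp (-(z ^ 2 / 2))| ^ 2 *
            Real.log (Real.exp 1 + Real.sqrt ε / |z|)
      ∧ MeasureTheory.Integrable
          (fun z : ℝ => (1 / z ^ 2) * |1 - Real.exp (-(z ^ 2 / 2))| ^ 2 *
            Real.log (Real.exp 1 + 1 / |z|)) := by
  have hs : (0:ℝ) < Real.sqrt ε := Real.sqrt_pos.mpr hε0
  have hss : Real.sqrt ε * Real.sqrt ε = ε := Real.mul_self_sqrt hε0.le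
  constructor
  · set g : ℝ → ℝ := fun z => (1 / z ^ 2) * |1 - Real.exp (-(z ^ 2 / 2))| ^ 2 *
      Real.log (Real.exp 1 + Real.sqrt ε / |z|) with hg
    have key : ∀ ξ : ℝ, (1 / ξ ^ 2) * |1 - Real.exp (-(ε * ξ ^ 2 / 2))| ^ 2 *
          Real.log (Real.exp 1 + 1 / |ξ|) = ε * g (Real.sqrt ε * ξ) := by
      intro ξ
      rcases eq_or_ne ξ 0 with rfl | hξ
      · simp [hg]
      · have h1 : (Real.sqrt ε * ξ) ^ 2 = ε * ξ ^ 2 := by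
          rw [mul_pow, Real.sq_sqrt hε0.le]
        have h2 : |Real.sqrt ε * ξ| = Real.sqrt ε * |ξ| := by
          rw [abs_mul, abs_of_pos hs]
        have h3 : Real.sqrt ε / (Real.sqrt ε * |ξ|) = 1 / |ξ| := by
          rw [div_mul_eq_div_div, div_self hs.ne']
        simp only [hg, h1, h2, h3]
        have hξ2 : ξ ^ 2 ≠ 0 := pow_ne_zero 2 hξ
        field_simp
      -- done
    calc (∫ ξ : ℝ, (1 / ξ ^ 2) * |1 - Real.exp (-(ε * ξ ^ 2 / 2))| ^ 2 *
          Real.log (Real.exp 1 + 1 / |ξ|))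
        = ∫ ξ : ℝ, ε * g (Real.sqrt ε * ξ) := by
          exact integral_congr_ae (Filter.Eventually.of_forall key)
      _ = ε * ∫ ξ : ℝ, g (Real.sqrt ε * ξ) := integral_const_mul ε _
      _ = ε * ((Real.sqrt ε)⁻¹ * ∫ z : ℝ, g z) := by
          rw [MeasureTheory.Measure.integral_comp_mul_left g (Real.sqrt ε), smul_eq_mul,
            abs_of_pos (inv_pos.mpr hs)]
      _ = Real.sqrt ε * ∫ z : ℝ, g z := by
          rw [← mul_assoc]
          congr 1
          field_simp
          exact (Real.sq_sqrt hε0.le).symm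
      _ ≤ Real.sqrt ε * ∫ z : ℝ, g z := le_refl _
  · -- integrability
    obtain ⟨C, hC⟩ : ∃ C : ℝ, C = (Real.exp 1 + 1) * Real.log (Real.exp 1 + 1) := ⟨_, rfl⟩
    have he : (1:ℝ) < Real.exp 1 := by
      have := Real.exp_one_gt_d9; linarith
    have hlog1 : (1:ℝ) ≤ Real.log (Real.exp 1 + 1) := by
      calc (1:ℝ) = Real.log (Real.exp 1) := (Real.log_exp 1).symm
        _ ≤ Real.log (Real.exp 1 + 1) :=
          Real.log_le_log (Real.exp_pos 1) (by linarith)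
    have hlogpos : 0 < Real.log (Real.exp 1 + 1) := lt_of_lt_of_le one_pos hlog1
    have hCpos : 0 < C := by
      rw [hC]; exact mul_pos (by linarith) hlogpos
    have hGint : Integrable (fun z : ℝ => 2 * C * (1 + z ^ 2)⁻¹) :=
      integrable_inv_one_add_sq.const_mul (2 * C)
    have hmeas : AEStronglyMeasurable
        (fun z : ℝ => (1 / z ^ 2) * |1 - Real.exp (-(z ^ 2 / 2))| ^ 2 *
            Real.log (Real.exp 1 + 1 / |z|)) volume := by
      apply Measurable.aestronglyMeasurable
      exact ((measurable_const.div (measurable_id.pow_const 2)).mul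
        ((measurable_const.sub (Real.measurable_exp.comp
          (((measurable_id.pow_const 2).div_const 2).neg))).abs.pow_const 2)).mul
        (Real.measurable_log.comp (measurable_const.add (measurable_const.div measurable_id.abs)))
    refine hGint.mono' hmeas (Filter.Eventually.of_forall fun z => ?_)
    rcases eq_or_ne z 0 with rfl | hz
    · simp
      positivity
    have hz2 : (0:ℝ) < z ^ 2 := by positivity
    have hza : (0:ℝ) < |z| := abs_pos.mpr hz
    obtain ⟨A, hA⟩ : ∃ A : ℝ, A = |1 - Real.exp (-(z ^ 2 / 2))| := ⟨_, rfl⟩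
    rw [← hA]
    have hexp_le : Real.exp (-(z ^ 2 / 2)) ≤ 1 := Real.exp_le_one_iff.mpr (by nlinarith)
    have hAeq : A = 1 - Real.exp (-(z ^ 2 / 2)) := by
      rw [hA]; exact abs_of_nonneg (by linarith)
    have hA0 : 0 ≤ A := hA ▸ abs_nonneg _
    have hA1 : A ≤ 1 := by
      rw [hAeq]
      have := Real.exp_pos (-(z ^ 2 / 2)); linarith
    obtain ⟨L, hL⟩ : ∃ L : ℝ, L = Real.log (Real.exp 1 + 1 / |z|) := ⟨_, rfl⟩
    rw [← hL]
    have hargpos : 0 < Real.exp 1 + 1 / |z| := by positivity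
    have hL0 : 0 ≤ L := by
      rw [hL]
      apply Real.log_nonneg
      have : (0:ℝ) ≤ 1 / |z| := by positivity
      linarith
    have hh0 : 0 ≤ (1 / z ^ 2) * A ^ 2 * L := by positivity
    rw [Real.norm_eq_abs, abs_of_nonneg hh0]
    rcases le_total 1 (z ^ 2) with hone | hone
    · -- |z| ≥ 1
      have hLle : L ≤ Real.log (Real.exp 1 + 1) := by
        rw [hL]
        apply Real.log_le_log hargpos
        have h1z : 1 / |z| ≤ 1 := by
          rw [div_le_one hza]
          nlinarith [sq_abs z]
        linarith
      have h1 : (1 / z ^ 2) * A ^ 2 * L ≤ (1 / z ^ 2) * Real.log (Real.exp 1 + 1) := by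
        have hA2 : A ^ 2 ≤ 1 := by nlinarith
        have h1z2 : (0:ℝ) ≤ 1 / z ^ 2 := by positivity
        nlinarith [mul_le_mul_of_nonneg_left hA2 h1z2]
      have h2 : (1 / z ^ 2) * Real.log (Real.exp 1 + 1) ≤ 2 * C * (1 + z ^ 2)⁻¹ := by
        have hrw : 2 * C * (1 + z ^ 2)⁻¹ = 2 * C / (1 + z ^ 2) := by ring
        rw [hrw, div_mul_eq_mul_div, one_mul,
          div_le_div_iff₀ hz2 (by positivity : (0:ℝ) < 1 + z ^ 2)]
        have hClog : Real.log (Real.exp 1 + 1) ≤ C := by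
          rw [hC]; nlinarith [hlogpos, he]
        have e1 : Real.log (Real.exp 1 + 1) * (1 + z ^ 2) ≤ C * (1 + z ^ 2) :=
          mul_le_mul_of_nonneg_right hClog (by positivity)
        have e2 : C * (1 + z ^ 2) ≤ 2 * C * z ^ 2 := by
          have := mul_nonneg hCpos.le (sub_nonneg.mpr hone)
          nlinarith
        linarith
      linarith
    · -- |z| ≤ 1
      have habs1 : |z| ≤ 1 := by nlinarith [sq_abs z, hza]
      have hAle : A ≤ z ^ 2 / 2 := by
        rw [hAeq]
        have := Real.add_one_le_exp (-(z ^ 2 / 2))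
        linarith
      have hLle : L ≤ Real.exp 1 + 1 / |z| := by
        rw [hL]
        have := Real.log_le_sub_one_of_pos hargpos
        linarith
      have step1 : (1 / z ^ 2) * A ^ 2 * L ≤ (z ^ 2 / 4) * L := by
        have hA2 : A ^ 2 ≤ z ^ 4 / 4 := by nlinarith
        have : (1 / z ^ 2) * A ^ 2 ≤ z ^ 2 / 4 := by
          rw [div_mul_eq_mul_div, one_mul, div_le_div_iff₀ hz2 (by norm_num)]
          nlinarith
        nlinarith [mul_le_mul_of_nonneg_right this hL0]
      have step2 : (z ^ 2 / 4) * L ≤ (Real.exp 1 + 1) / 4 := by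
        have h1 : (z ^ 2 / 4) * L ≤ (z ^ 2 / 4) * (Real.exp 1 + 1 / |z|) := by
          apply mul_le_mul_of_nonneg_left hLle (by positivity)
        have h2 : (z ^ 2 / 4) * (Real.exp 1 + 1 / |z|) = Real.exp 1 * z ^ 2 / 4 + |z| / 4 := by
          field_simp
          rw [← sq_abs z]
          ring
        have h3 : Real.exp 1 * z ^ 2 / 4 + |z| / 4 ≤ (Real.exp 1 + 1) / 4 := by
          nlinarith [Real.exp_pos 1]
        linarith
      have step3 : (Real.exp 1 + 1) / 4 ≤ 2 * C * (1 + z ^ 2)⁻¹ := by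
        have hrw : 2 * C * (1 + z ^ 2)⁻¹ = 2 * C / (1 + z ^ 2) := by ring
        rw [hrw, div_le_div_iff₀ (by norm_num : (0:ℝ) < 4)
          (by positivity : (0:ℝ) < 1 + z ^ 2)]
        have hCge : C ≥ Real.exp 1 + 1 := by
          rw [hC]; nlinarith [hlog1, he]
        nlinarith [hCpos]
      linarith
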